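/- arXiv:0705.3673 — 4 statements merged into one kernel-verified Lean document; each statement's English description precedes it below -/
import Mathlib

section
/- Let d be a positive integer, let σ be real with 0 < σ < 1, and let λ : ℕ → ℝ (indexed from 1) be nondecreasing with λ_1 > 0 and λ_k → ∞. Suppose that (i) for all z ≥ λ_1, R_σ(z) ≥ (1 + d/4) · R_{σ+1}(z)/z, (ii) for all z ≥ λ_1, R_{σ+1}(z) ≥ (1 + d/(2(σ+2))) · R_{σ+2}(z)/z, and (iii) z ↦ R_{σ+2}(z)/z^{σ + 2 + d/2} is nondecreasing on [λ_1, ∞). Then for every z ≥ (1 + (2σ+4)/d)·λ_1, R_σ(z) ≥ (1 + d/4) · (2σ+4)^{σ+1} · d^{d/2} · (d + 2σ + 4)^{−(σ + 1 + d/2)} · λ_1^{−d/2} · z^{σ + d/2}. -/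
/-!
Evaluate (iii) between `z₀ := (1 + (2σ+4)/d) λ₁` and `z ≥ z₀`, bound `R_{σ+2}(z₀)` from below
by its first term `(z₀ - λ₁)^{σ+2}`, and climb down to `R_σ(z)` with (ii) and then (i). The
choice of `z₀` maximises `(z₀ - λ₁)^{σ+2} / z₀^{σ+2+d/2}`, which produces the constant.
-/

open Real Filter

/-- Riesz mean of order `σ` of the sequence `λ_1, λ_2, …` (here `lam (k+1)` is `λ_{k+1}`):
`R_σ(z) := Σ_{k ≥ 1} (z - λ_k)_+ ^ σ`. -/
noncomputable def rieszMean (lam : ℕ → ℝ) (σ z : ℝ) : ℝ :=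
  ∑' k : ℕ, (max (z - lam (k + 1)) 0) ^ σ

/-- The eigenvalue counting function `N(z) := #{k ≥ 1 : λ_k < z}`, as a real number. -/
noncomputable def countingFn (lam : ℕ → ℝ) (z : ℝ) : ℝ :=
  Nat.card {k : ℕ // 1 ≤ k ∧ lam k < z}

/-- The average `λ̄_j := (1/j) Σ_{ℓ=1}^j λ_ℓ` of the first `j` terms. -/
noncomputable def eigAvg (lam : ℕ → ℝ) (j : ℕ) : ℝ :=
  (∑ ℓ ∈ Finset.Icc 1 j, lam ℓ) / j

lemma summable_rieszMean_term {lam : ℕ → ℝ} (htend : Tendsto lam atTop atTop) {s : ℝ}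
    (hs : s ≠ 0) (z : ℝ) : Summable fun k : ℕ => max (z - lam (k + 1)) 0 ^ s := by
  obtain ⟨N, hN⟩ := (htend.eventually_ge_atTop z).exists_forall_of_atTop
  refine summable_of_ne_finset_zero (s := Finset.range N) fun k hk => ?_
  have hzk : z ≤ lam (k + 1) := hN _ (by simp only [Finset.mem_range, not_lt] at hk; omega)
  rw [max_eq_right (by linarith), zero_rpow hs]

lemma rpow_sub_lam_one_le_rieszMean {lam : ℕ → ℝ} (htend : Tendsto lam atTop atTop) {s : ℝ}
    (hs : s ≠ 0) {z : ℝ} (hz : lam 1 ≤ z) : (z - lam 1) ^ s ≤ rieszMean lam s z := by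
  have h := (summable_rieszMean_term htend hs z).le_tsum 0 fun k _ => by positivity
  rwa [zero_add, max_eq_left (by linarith)] at h

lemma mul_rpow_le_of_monotoneOn_div_rpow {f : ℝ → ℝ} {p a x y : ℝ}
    (hf : MonotoneOn (fun z => f z / z ^ p) (Set.Ici a)) (ha : 0 < a) (hax : a ≤ x)
    (hxy : x ≤ y) : f x / x ^ p * y ^ p ≤ f y := by
  have h : f x / x ^ p ≤ f y / y ^ p := hf hax (hax.trans hxy) hxy
  rwa [le_div_iff₀ (rpow_pos_of_pos (by linarith) p)] at h

lemma rieszMean_lower_bound_constant_eq {σ D L z : ℝ} (hσ : -2 < σ) (hD : 0 < D) (hL : 0 < L)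
    (hz : 0 < z) :
    (1 + D / 4) * ((1 + D / (2 * (σ + 2))) *
        (((1 + (2 * σ + 4) / D) * L - L) ^ (σ + 2)
          / ((1 + (2 * σ + 4) / D) * L) ^ (σ + 2 + D / 2) * z ^ (σ + 2 + D / 2)) / z) / z
      = (1 + D / 4) * (2 * σ + 4) ^ (σ + 1) * D ^ (D / 2) *
          (D + 2 * σ + 4) ^ (-(σ + 1 + D / 2)) * L ^ (-D / 2) * z ^ (σ + D / 2) := by
  have hσ2 : σ + 2 ≠ 0 := by linarith
  have hA : 0 < 2 * σ + 4 := by linarith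
  have hS : 0 < D + 2 * σ + 4 := by linarith
  have hApow : (2 * σ + 4) ^ (σ + 2) = (2 * σ + 4) ^ (σ + 1) * (2 * σ + 4) := by
    rw [← rpow_add_one hA.ne']; ring_nf
  have hSpow : (D + 2 * σ + 4) ^ (σ + 2 + D / 2) =
      (D + 2 * σ + 4) ^ (σ + 1 + D / 2) * (D + 2 * σ + 4) := by
    rw [← rpow_add_one hS.ne']; ring_nf
  have hDpow : D ^ (σ + 2 + D / 2) = D ^ (σ + 2) * D ^ (D / 2) := by rw [← rpow_add hD]
  have hLpow : L ^ (σ + 2 + D / 2) = L ^ (σ + 2) * L ^ (D / 2) := by rw [← rpow_add hL]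
  have hzpow : z ^ (σ + 2 + D / 2) = z ^ (σ + D / 2) * z * z := by
    rw [← rpow_add_one hz.ne', ← rpow_add_one hz.ne']; ring_nf
  rw [show (1 + (2 * σ + 4) / D) * L - L = (2 * σ + 4) * L / D by field_simp; ring,
    show (1 + (2 * σ + 4) / D) * L = (D + 2 * σ + 4) * L / D by field_simp; ring,
    div_rpow (by positivity) hD.le, div_rpow (by positivity) hD.le, mul_rpow hA.le hL.le,
    mul_rpow hS.le hL.le, rpow_neg hS.le, neg_div, rpow_neg hL.le, hApow, hSpow, hDpow, hLpow,
    hzpow]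
  field_simp
  ring

theorem rieszMean_lower_bound_sigma_lt_one_general (d : ℕ) (hd : 0 < d)
    (σ : ℝ) (hσ0 : 0 < σ) (lam : ℕ → ℝ)
    (hpos : 0 < lam 1)
    (htend : Tendsto lam atTop atTop)
    (hdiff1 : ∀ z : ℝ, lam 1 ≤ z →
      rieszMean lam σ z ≥ (1 + (d : ℝ) / 4) * rieszMean lam (σ + 1) z / z)
    (hdiff2 : ∀ z : ℝ, lam 1 ≤ z →
      rieszMean lam (σ + 1) z ≥
        (1 + (d : ℝ) / (2 * (σ + 2))) * rieszMean lam (σ + 2) z / z)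
    (hmonoR : MonotoneOn (fun z => rieszMean lam (σ + 2) z / z ^ (σ + 2 + (d : ℝ) / 2))
      (Set.Ici (lam 1))) :
    ∀ z : ℝ, (1 + (2 * σ + 4) / (d : ℝ)) * lam 1 ≤ z →
      rieszMean lam σ z ≥
        (1 + (d : ℝ) / 4) * (2 * σ + 4) ^ (σ + 1) * (d : ℝ) ^ ((d : ℝ) / 2) *
          ((d : ℝ) + 2 * σ + 4) ^ (-(σ + 1 + (d : ℝ) / 2)) *
          lam 1 ^ (-(d : ℝ) / 2) * z ^ (σ + (d : ℝ) / 2) := by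
  intro z hz
  have hD : (0 : ℝ) < d := by exact_mod_cast hd
  set z₀ := (1 + (2 * σ + 4) / (d : ℝ)) * lam 1
  have hz₀ : lam 1 ≤ z₀ :=
    le_mul_of_one_le_left hpos.le (le_add_of_nonneg_right (by positivity))
  have hLz : lam 1 ≤ z := hz₀.trans hz
  have hz0 : 0 < z := hpos.trans_le hLz
  rw [ge_iff_le, ← rieszMean_lower_bound_constant_eq (by linarith) hD hpos hz0]
  calc _ ≤ (1 + (d : ℝ) / 4) * ((1 + (d : ℝ) / (2 * (σ + 2))) * (rieszMean lam (σ + 2) z₀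
          / z₀ ^ (σ + 2 + (d : ℝ) / 2) * z ^ (σ + 2 + (d : ℝ) / 2)) / z) / z := by
        gcongr
        exact rpow_sub_lam_one_le_rieszMean htend (by linarith) hz₀
    _ ≤ (1 + (d : ℝ) / 4) * ((1 + (d : ℝ) / (2 * (σ + 2))) * rieszMean lam (σ + 2) z / z) / z := by
        gcongr
        exact mul_rpow_le_of_monotoneOn_div_rpow hmonoR hpos hz₀ hz
    _ ≤ (1 + (d : ℝ) / 4) * rieszMean lam (σ + 1) z / z := by
        gcongr
        exact hdiff2 z hLz
    _ ≤ rieszMean lam σ z := hdiff1 z hLz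

/-- Inequality (2.17) of Corollary 5: for `0 < σ < 1`, given the difference inequalities
(i), (ii) and monotonicity of `R_{σ+2}(z)/z^(σ+2+d/2)`, one has, for
`z ≥ (1 + (2σ+4)/d) λ_1`,
`R_σ(z) ≥ (1 + d/4) (2σ+4)^(σ+1) d^(d/2) (d+2σ+4)^(-(σ+1+d/2)) λ_1^(-d/2) z^(σ+d/2)`. -/
theorem rieszMean_lower_bound_sigma_lt_one (d : ℕ) (hd : 0 < d)
    (σ : ℝ) (hσ0 : 0 < σ) (hσ1 : σ < 1) (lam : ℕ → ℝ)
    (hmono : ∀ k : ℕ, 1 ≤ k → lam k ≤ lam (k + 1))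
    (hpos : 0 < lam 1)
    (htend : Tendsto lam atTop atTop)
    (hdiff1 : ∀ z : ℝ, lam 1 ≤ z →
      rieszMean lam σ z ≥ (1 + (d : ℝ) / 4) * rieszMean lam (σ + 1) z / z)
    (hdiff2 : ∀ z : ℝ, lam 1 ≤ z →
      rieszMean lam (σ + 1) z ≥
        (1 + (d : ℝ) / (2 * (σ + 2))) * rieszMean lam (σ + 2) z / z)
    (hmonoR : MonotoneOn (fun z => rieszMean lam (σ + 2) z / z ^ (σ + 2 + (d : ℝ) / 2))
      (Set.Ici (lam 1))) :
    ∀ z : ℝ, (1 + (2 * σ + 4) / (d : ℝ)) * lam 1 ≤ z →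
      rieszMean lam σ z ≥
        (1 + (d : ℝ) / 4) * (2 * σ + 4) ^ (σ + 1) * (d : ℝ) ^ ((d : ℝ) / 2) *
          ((d : ℝ) + 2 * σ + 4) ^ (-(σ + 1 + (d : ℝ) / 2)) *
          lam 1 ^ (-(d : ℝ) / 2) * z ^ (σ + (d : ℝ) / 2) :=
  rieszMean_lower_bound_sigma_lt_one_general d hd σ hσ0 lam hpos htend hdiff1 hdiff2 hmonoR
end

section
/- Let d be a positive integer, let j ≥ 1 be an integer, and let λ : ℕ → ℝ (indexed from 1) be nondecreasing with λ_1 > 0 and λ_k → ∞. Suppose that (i) z ↦ R_2(z)/z^{2 + d/2} is nondecreasing on [λ_1, ∞), and (ii) λ_j ≤ (1 + 4/d)·λ̄_j. Then for every z ≥ (1 + 4/d)·λ̄_j, R_2(z) ≥ j · z^{2 + d/2} / ( (1 + d/4)^2 · ((1 + 4/d)·λ̄_j)^{d/2} ). -/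
/-!
At `z₀ = (1 + 4/d) λ̄_j`, Yang's inequality puts `λ_1, …, λ_j` below `z₀`, so by Cauchy–Schwarz
`R_2(z₀) ≥ Σ_{ℓ ≤ j} (z₀ - λ_ℓ)² ≥ j (z₀ - λ̄_j)² = j z₀² / (1 + d/4)²`. The monotonicity of
`R_2(z) / z^(2 + d/2)` then carries this bound from `z₀` to every `z ≥ z₀`.
-/

open Real Filter

open Finset

theorem sum_Icc_one_eq_sum_range_succ {M : Type*} [AddCommMonoid M] (f : ℕ → M) (n : ℕ) :
    ∑ ℓ ∈ Icc 1 n, f ℓ = ∑ k ∈ range n, f (k + 1) := by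
  rw [range_eq_Ico, sum_Ico_add', ← Ico_add_one_right_eq_Icc]

theorem sum_Icc_one_eq_mul_eigAvg (lam : ℕ → ℝ) {j : ℕ} (hj : 0 < j) :
    ∑ ℓ ∈ Icc 1 j, lam ℓ = j * eigAvg lam j := by
  rw [eigAvg, mul_div_cancel₀ _ (by positivity)]

theorem le_eigAvg {lam : ℕ → ℝ} (hmono : MonotoneOn lam (Set.Ici 1)) {j : ℕ} (hj : 0 < j) :
    lam 1 ≤ eigAvg lam j := by
  rw [eigAvg, le_div_iff₀ (by positivity), mul_comm, ← nsmul_eq_mul]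
  simpa using sum_le_sum (s := Icc 1 j) (f := fun _ => lam 1) fun ℓ hℓ =>
    hmono Set.self_mem_Ici (mem_Icc.1 hℓ).1 (mem_Icc.1 hℓ).1

theorem summable_rieszMean {lam : ℕ → ℝ} (htend : Tendsto lam atTop atTop) {σ : ℝ} (hσ : σ ≠ 0)
    (z : ℝ) : Summable fun k : ℕ => (max (z - lam (k + 1)) 0) ^ σ := by
  obtain ⟨N, hN⟩ := (tendsto_atTop.1 htend z).exists_forall_of_atTop
  refine summable_of_ne_finset_zero (s := range N) fun k hk => ?_
  rw [max_eq_right (sub_nonpos.2 (hN (k + 1) (by simp only [mem_range, not_lt] at hk; omega))), zero_rpow hσ]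

theorem sum_le_rieszMean {lam : ℕ → ℝ} (htend : Tendsto lam atTop atTop) {σ : ℝ} (hσ : σ ≠ 0)
    (z : ℝ) (s : Finset ℕ) : ∑ k ∈ s, (max (z - lam (k + 1)) 0) ^ σ ≤ rieszMean lam σ z :=
  (summable_rieszMean htend hσ z).sum_le_tsum s fun _ _ => rpow_nonneg (le_max_right _ _) _

theorem mul_sq_sub_eigAvg_le_rieszMean_two {lam : ℕ → ℝ} (htend : Tendsto lam atTop atTop)
    {j : ℕ} (hj : 0 < j) {z : ℝ} (hz : ∀ ℓ ∈ Icc 1 j, lam ℓ ≤ z) :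
    j * (z - eigAvg lam j) ^ 2 ≤ rieszMean lam 2 z := by
  have hsum : ∑ ℓ ∈ Icc 1 j, (z - lam ℓ) = j * (z - eigAvg lam j) := by
    rw [sum_sub_distrib, sum_Icc_one_eq_mul_eigAvg lam hj, sum_const, Nat.card_Icc]
    simp [mul_sub]
  have hcs := sq_sum_le_card_mul_sum_sq (s := Icc 1 j) (f := fun ℓ => z - lam ℓ)
  rw [hsum, Nat.card_Icc, Nat.add_sub_cancel] at hcs
  have hsq : j * (z - eigAvg lam j) ^ 2 ≤ ∑ ℓ ∈ Icc 1 j, (z - lam ℓ) ^ 2 := by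
    have hjpos : (0 : ℝ) < j := by exact_mod_cast hj
    nlinarith
  have hpart : ∑ ℓ ∈ Icc 1 j, (z - lam ℓ) ^ 2 = ∑ ℓ ∈ Icc 1 j, (max (z - lam ℓ) 0) ^ (2 : ℝ) :=
    sum_congr rfl fun ℓ hℓ => by
      rw [max_eq_left (sub_nonneg.2 (hz ℓ hℓ)), rpow_two]
  rw [hpart, sum_Icc_one_eq_sum_range_succ (fun ℓ => (max (z - lam ℓ) 0) ^ (2 : ℝ))] at hsq
  exact hsq.trans (sum_le_rieszMean htend two_ne_zero z _)

theorem mul_div_rpow_le_of_monotoneOn_div_rpow {f : ℝ → ℝ} {p a z₀ z : ℝ}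
    (hf : MonotoneOn (fun z => f z / z ^ p) (Set.Ici a)) (ha : a ≤ z₀) (hz₀ : 0 < z₀)
    (hz : z₀ ≤ z) : f z₀ * (z / z₀) ^ p ≤ f z := by
  have hzpos : 0 < z ^ p := rpow_pos_of_pos (hz₀.trans_le hz) p
  have := hf (Set.mem_Ici.2 ha) (Set.mem_Ici.2 (ha.trans hz)) hz
  rw [div_rpow (hz₀.trans_le hz).le hz₀.le, mul_div_left_comm, mul_comm]
  exact (le_div_iff₀ hzpos).1 this

/-- Inequality (2.26) of Corollary 7: under monotonicity of `R_2(z)/z^(2+d/2)` and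
Yang's inequality `λ_j ≤ (1 + 4/d) λ̄_j`, for `z ≥ (1 + 4/d) λ̄_j`,
`R_2(z) ≥ j z^(2+d/2) / ((1 + d/4)^2 ((1 + 4/d) λ̄_j)^(d/2))`. -/
theorem rieszMean_two_lower_bound_avg (d : ℕ) (hd : 0 < d) (j : ℕ) (hj : 1 ≤ j)
    (lam : ℕ → ℝ)
    (hmono : ∀ k : ℕ, 1 ≤ k → lam k ≤ lam (k + 1))
    (hpos : 0 < lam 1)
    (htend : Tendsto lam atTop atTop)
    (hmonoR : MonotoneOn (fun z => rieszMean lam 2 z / z ^ (2 + (d : ℝ) / 2))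
      (Set.Ici (lam 1)))
    (hyang : lam j ≤ (1 + 4 / (d : ℝ)) * eigAvg lam j) :
    ∀ z : ℝ, (1 + 4 / (d : ℝ)) * eigAvg lam j ≤ z →
      rieszMean lam 2 z ≥
        (j : ℝ) * z ^ (2 + (d : ℝ) / 2) /
          ((1 + (d : ℝ) / 4) ^ 2 *
            ((1 + 4 / (d : ℝ)) * eigAvg lam j) ^ ((d : ℝ) / 2)) := by
  intro z hz
  set A := eigAvg lam j
  set z₀ := (1 + 4 / (d : ℝ)) * A
  have hlam : MonotoneOn lam (Set.Ici 1) := monotoneOn_nat_Ici_of_le_succ hmono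
  have hA : lam 1 ≤ A := le_eigAvg hlam hj
  have hAz₀ : A ≤ z₀ :=
    le_mul_of_one_le_left (hpos.trans_le hA).le (le_add_of_nonneg_right (by positivity))
  have hz₀ : 0 < z₀ := hpos.trans_le (hA.trans hAz₀)
  have hgap : z₀ - A = z₀ / (1 + d / 4) := by
    simp only [z₀]; field_simp; ring
  have hR₀ : j * (z₀ / (1 + d / 4)) ^ 2 ≤ rieszMean lam 2 z₀ := by
    rw [← hgap]
    exact mul_sq_sub_eigAvg_le_rieszMean_two htend hj fun ℓ hℓ =>
      (hlam (mem_Icc.1 hℓ).1 hj (mem_Icc.1 hℓ).2).trans hyang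
  have hrhs : j * z ^ (2 + (d : ℝ) / 2) / ((1 + d / 4) ^ 2 * z₀ ^ ((d : ℝ) / 2)) =
      j * (z₀ / (1 + d / 4)) ^ 2 * (z / z₀) ^ (2 + (d : ℝ) / 2) := by
    rw [div_rpow (hz₀.le.trans hz) hz₀.le, rpow_add hz₀, rpow_two]
    field_simp
  rw [ge_iff_le, hrhs]
  calc _ ≤ rieszMean lam 2 z₀ * (z / z₀) ^ (2 + (d : ℝ) / 2) :=
        mul_le_mul_of_nonneg_right hR₀ (rpow_nonneg (div_nonneg (hz₀.le.trans hz) hz₀.le) _)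
    _ ≤ rieszMean lam 2 z :=
      mul_div_rpow_le_of_monotoneOn_div_rpow hmonoR (hA.trans hAz₀) hz₀ hz
end

section
/- Let d be a positive integer, let σ ≥ 2 be real, and let λ : ℕ → ℝ (indexed from 1) be nondecreasing with λ_1 > 0 and λ_k → ∞. Suppose that for all z ≥ λ_1, R_{σ−1}(z) ≥ (1 + d/(2σ)) · R_σ(z)/z. Then for all z ≥ λ_1, N(z) · z^σ ≥ ((d + 2σ)/(2σ))^σ · R_σ(z). -/
open Real Filter

/-!
Since `λ_k → ∞`, only the `N(z)` indices with `λ_k < z` contribute to the Riesz means, and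
Hölder's inequality over these `N(z)` terms gives `R_{σ-1} ≤ R_σ ^ (1 - 1/σ) N ^ (1/σ)`.
Together with (2.3) this reads `c R_σ ^ (1/σ) ≤ z N ^ (1/σ)` with `c = (d + 2σ)/(2σ)`;
raising it to the power `σ` gives the claim.
-/

open Finset

theorem Real.sum_rpow_sub_one_le {ι : Type*} (s : Finset ι) {f : ι → ℝ} {σ : ℝ}
    (hσ : 1 < σ) (hf : ∀ i ∈ s, 0 ≤ f i) :
    ∑ i ∈ s, f i ^ (σ - 1) ≤ (∑ i ∈ s, f i ^ σ) ^ (1 - σ⁻¹) * (#s : ℝ) ^ σ⁻¹ := by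
  have hpq : (σ / (σ - 1)).HolderConjugate σ := (Real.HolderConjugate.conjExponent hσ).symm
  have h := inner_le_Lp_mul_Lq_of_nonneg s hpq (fun i hi => rpow_nonneg (hf i hi) (σ - 1))
    (fun _ _ => zero_le_one)
  have hpow : ∀ i ∈ s, (f i ^ (σ - 1)) ^ (σ / (σ - 1)) = f i ^ σ := fun i hi => by
    rw [← rpow_mul (hf i hi), mul_div_cancel₀ _ (sub_ne_zero.2 hσ.ne')]
  simpa [sum_congr rfl hpow, one_div_div, sub_div, div_self (by linarith : σ ≠ 0)] using h

theorem Real.rpow_mul_le_of_mul_div_le {A n z c σ : ℝ} (hσ : 0 < σ) (hA : 0 ≤ A) (hn : 0 ≤ n)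
    (hz : 0 < z) (hc : 0 ≤ c) (h : c * A / z ≤ A ^ (1 - σ⁻¹) * n ^ σ⁻¹) :
    c ^ σ * A ≤ n * z ^ σ := by
  rcases hA.eq_or_lt with rfl | hA
  · simp only [mul_zero]; positivity
  have hsplit : A = A ^ (1 - σ⁻¹) * A ^ σ⁻¹ := by
    rw [← rpow_add hA, sub_add_cancel, rpow_one]
  have hroot : c * A ^ σ⁻¹ ≤ n ^ σ⁻¹ * z := by
    refine le_of_mul_le_mul_left ?_ (rpow_pos_of_pos hA (1 - σ⁻¹))
    calc A ^ (1 - σ⁻¹) * (c * A ^ σ⁻¹) = c * A := by rw [mul_left_comm, ← hsplit]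
      _ ≤ z * (A ^ (1 - σ⁻¹) * n ^ σ⁻¹) := (div_le_iff₀' hz).1 h
      _ = A ^ (1 - σ⁻¹) * (n ^ σ⁻¹ * z) := by ring
  have := rpow_le_rpow (by positivity) hroot hσ.le
  rwa [mul_rpow hc (by positivity), mul_rpow (by positivity) hz.le, rpow_inv_rpow hA.le hσ.ne',
    rpow_inv_rpow hn hσ.ne'] at this

section
variable {lam : ℕ → ℝ} {z : ℝ}

theorem Filter.Tendsto.finite_setOf_apply_succ_lt (htend : Tendsto lam atTop atTop) (z : ℝ) :
    {k | lam (k + 1) < z}.Finite := by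
  have := ((tendsto_add_atTop_iff_nat 1).2 htend).eventually_ge_atTop z
  rw [← Nat.cofinite_eq_atTop, eventually_cofinite] at this
  simpa using this

theorem rieszMean_nonneg (σ : ℝ) : 0 ≤ rieszMean lam σ z :=
  tsum_nonneg fun _ => rpow_nonneg (le_max_right _ _) _

theorem rieszMean_eq_sum (hfin : {k | lam (k + 1) < z}.Finite) {σ : ℝ} (hσ : σ ≠ 0) :
    rieszMean lam σ z = ∑ k ∈ hfin.toFinset, (z - lam (k + 1)) ^ σ := by
  rw [rieszMean, tsum_eq_sum (s := hfin.toFinset)]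
  · refine sum_congr rfl fun k hk => ?_
    rw [max_eq_left (sub_nonneg.2 (hfin.mem_toFinset.1 hk).le)]
  · intro k hk
    rw [max_eq_right (sub_nonpos.2 (not_lt.1 (hfin.mem_toFinset.not.1 hk))), zero_rpow hσ]

theorem countingFn_eq_card (hfin : {k | lam (k + 1) < z}.Finite) :
    countingFn lam z = #hfin.toFinset := by
  have himage : {k | 1 ≤ k ∧ lam k < z} = Nat.succ '' {k | lam (k + 1) < z} := by
    ext k
    cases k <;> simp
  rw [countingFn, ← Set.coe_ofPred, Nat.card_coe_set_eq, himage,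
    Set.ncard_image_of_injective _ Nat.succ_injective, Set.ncard_eq_toFinset_card _ hfin]

theorem rieszMean_sub_one_le (hfin : {k | lam (k + 1) < z}.Finite) {σ : ℝ} (hσ : 1 < σ) :
    rieszMean lam (σ - 1) z ≤ rieszMean lam σ z ^ (1 - σ⁻¹) * countingFn lam z ^ σ⁻¹ := by
  rw [rieszMean_eq_sum hfin (by linarith), rieszMean_eq_sum hfin (by linarith),
    countingFn_eq_card hfin]
  exact sum_rpow_sub_one_le _ hσ fun k hk => sub_nonneg.2 (hfin.mem_toFinset.1 hk).le

end

theorem counting_lower_bound_general_sigma_general (d : ℕ)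
    (σ : ℝ) (hσ : 2 ≤ σ) (lam : ℕ → ℝ)
    (hpos : 0 < lam 1)
    (htend : Tendsto lam atTop atTop)
    (hdiff : ∀ z : ℝ, lam 1 ≤ z →
      rieszMean lam (σ - 1) z ≥ (1 + (d : ℝ) / (2 * σ)) * rieszMean lam σ z / z) :
    ∀ z : ℝ, lam 1 ≤ z →
      countingFn lam z * z ^ σ ≥
        (((d : ℝ) + 2 * σ) / (2 * σ)) ^ σ * rieszMean lam σ z := by
  intro z hz
  have hconst : 1 + (d : ℝ) / (2 * σ) = (d + 2 * σ) / (2 * σ) := by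
    field_simp
    ring
  have hbound := (hconst ▸ hdiff z hz).trans
    (rieszMean_sub_one_le (htend.finite_setOf_apply_succ_lt z) (by linarith))
  exact rpow_mul_le_of_mul_div_le (by linarith) (rieszMean_nonneg σ) (Nat.cast_nonneg _)
    (hpos.trans_le hz) (by positivity) hbound

/-- Inequality (2.24): from the difference inequality (2.3), for all `z ≥ λ_1` and
`σ ≥ 2`, `N(z) z^σ ≥ ((d + 2σ)/(2σ))^σ R_σ(z)`. -/
theorem counting_lower_bound_general_sigma (d : ℕ) (hd : 0 < d)
    (σ : ℝ) (hσ : 2 ≤ σ) (lam : ℕ → ℝ)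
    (hmono : ∀ k : ℕ, 1 ≤ k → lam k ≤ lam (k + 1))
    (hpos : 0 < lam 1)
    (htend : Tendsto lam atTop atTop)
    (hdiff : ∀ z : ℝ, lam 1 ≤ z →
      rieszMean lam (σ - 1) z ≥ (1 + (d : ℝ) / (2 * σ)) * rieszMean lam σ z / z) :
    ∀ z : ℝ, lam 1 ≤ z →
      countingFn lam z * z ^ σ ≥
        (((d : ℝ) + 2 * σ) / (2 * σ)) ^ σ * rieszMean lam σ z :=
  counting_lower_bound_general_sigma_general d σ hσ lam hpos htend hdiff
end

section
/- Let d be a positive integer, let j ≥ 1 be an integer, and let λ : ℕ → ℝ (indexed from 1) be nondecreasing with λ_1 > 0. Suppose that for every z ≥ (1 + 4/d)·λ̄_j one has R_1(z) ≥ j · z^{1 + d/2} / ( (1 + d/4) · ((1 + 4/d)·λ̄_j)^{d/2} ). Then for every integer k with k ≥ j·(1 + d/2)/(1 + d/4), one has λ̄_k / λ̄_j ≤ 2 · ( (1 + d/4)/(1 + d/2) )^{1 + 2/d} · (k/j)^{2/d}. -/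
/-!
At `z = λ_{k+1}` the Riesz mean of a nondecreasing sequence is `R_1(z) = k z - Σ_{ℓ ≤ k} λ_ℓ`,
so `Σ_{ℓ ≤ k} λ_ℓ = sup_z (k z - R_1(z))` is the Legendre transform of `R_1`. When
`λ_{k+1} ≥ (1 + 4/d) λ̄_j` the lower bound on `R_1` applies at `λ_{k+1}`, and the sum is bounded by
the Legendre transform `(p - 1)/p · b · (b/(p a))^{1/(p-1)}` of the power `a z^p`,
`p = 1 + d/2`. Otherwise every `λ_ℓ` with `j < ℓ ≤ k` is below `(1 + 4/d) λ̄_j`, and Bernoulli's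
inequality, together with `k ≥ j (1 + d/2)/(1 + d/4)`, gives the same bound.
-/

open Real Filter

theorem le_mul_one_add_half_div_one_add_quarter {d x : ℝ} (hd : 0 ≤ d) (hx : 0 ≤ x) :
    x ≤ x * (1 + d / 2) / (1 + d / 4) := by
  rw [le_div_iff₀ (by positivity)]
  nlinarith

theorem rpow_add_mul_sub_le_rpow {p z₀ z : ℝ} (hp : 1 ≤ p) (hz₀ : 0 < z₀) (hz : 0 ≤ z) :
    z₀ ^ p + p * z₀ ^ (p - 1) * (z - z₀) ≤ z ^ p := by
  have hbern := one_add_mul_self_le_rpow_one_add (s := z / z₀ - 1)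
    (by linarith [div_nonneg hz hz₀.le]) hp
  rw [add_sub_cancel, div_rpow hz hz₀.le, le_div_iff₀ (rpow_pos_of_pos hz₀ p)] at hbern
  calc z₀ ^ p + p * z₀ ^ (p - 1) * (z - z₀)
      = (1 + p * (z / z₀ - 1)) * z₀ ^ p := by
        rw [rpow_sub_one hz₀.ne']
        field_simp
    _ ≤ z ^ p := hbern

theorem mul_sub_mul_rpow_le {p a b z : ℝ} (hp : 1 < p) (ha : 0 < a) (hb : 0 < b) (hz : 0 ≤ z) :
    b * z - a * z ^ p ≤ (p - 1) / p * b * (b / (p * a)) ^ (p - 1)⁻¹ := by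
  have hpa : 0 < p * a := by positivity
  set z₀ := (b / (p * a)) ^ (p - 1)⁻¹
  have hz₀ : 0 < z₀ := by positivity
  have hz₀p : z₀ ^ (p - 1) = b / (p * a) :=
    rpow_inv_rpow (div_pos hb hpa).le (by linarith)
  have htangent := rpow_add_mul_sub_le_rpow hp.le hz₀ hz
  have hz₀pow : z₀ ^ p = z₀ ^ (p - 1) * z₀ := by rw [← rpow_add_one hz₀.ne', sub_add_cancel]
  rw [hz₀pow, hz₀p] at htangent
  rw [← sub_nonneg]
  have key : (p - 1) / p * b * z₀ - (b * z - a * z ^ p) =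
      a * (z ^ p - (b / (p * a) * z₀ + p * (b / (p * a)) * (z - z₀))) := by
    field_simp
    ring
  rw [key]
  exact mul_nonneg ha.le (by linarith)

section Sequence

variable {lam : ℕ → ℝ}

theorem rieszMean_one_eig_succ (hmono : ∀ k : ℕ, 1 ≤ k → lam k ≤ lam (k + 1)) (k : ℕ) :
    rieszMean lam 1 (lam (k + 1)) = k * lam (k + 1) - ∑ ℓ ∈ Finset.Icc 1 k, lam ℓ := by
  have hmono' : MonotoneOn lam (Set.Ici 1) := monotoneOn_nat_Ici_of_le_succ hmono
  have hle : ∀ i j : ℕ, i ≤ j → lam (i + 1) ≤ lam (j + 1) := fun i j hij =>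
    hmono' (by simp) (by simp) (by omega)
  have hsum : rieszMean lam 1 (lam (k + 1)) = ∑ i ∈ Finset.range k, (lam (k + 1) - lam (i + 1)) := by
    rw [rieszMean, tsum_eq_sum (s := Finset.range k)]
    · refine Finset.sum_congr rfl fun i hi => ?_
      rw [max_eq_left (sub_nonneg.2 (hle i k (Finset.mem_range.1 hi).le)), rpow_one]
    · intro i hi
      rw [max_eq_right (sub_nonpos.2 (hle k i (by simpa using hi))), rpow_one]
  rw [hsum, Finset.sum_sub_distrib, Finset.sum_const, Finset.card_range, nsmul_eq_mul,
    Finset.range_eq_Ico, Finset.sum_Ico_add' lam 0 k 1, zero_add, Finset.Ico_add_one_right_eq_Icc]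

theorem eigAvg_pos (hmono : ∀ k : ℕ, 1 ≤ k → lam k ≤ lam (k + 1)) (hpos : 0 < lam 1)
    {j : ℕ} (hj : 1 ≤ j) : 0 < eigAvg lam j := by
  have hmono' : MonotoneOn lam (Set.Ici 1) := monotoneOn_nat_Ici_of_le_succ hmono
  refine div_pos (Finset.sum_pos (fun ℓ hℓ => ?_) ⟨1, by simp [hj]⟩) (by exact_mod_cast hj)
  have hℓ : 1 ≤ ℓ := (Finset.mem_Icc.1 hℓ).1
  exact hpos.trans_le (hmono' (Set.mem_Ici.2 le_rfl) hℓ hℓ)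

theorem sum_Icc_le_add_mul (hmono : ∀ k : ℕ, 1 ≤ k → lam k ≤ lam (k + 1)) {j k : ℕ}
    (hjk : j ≤ k) :
    ∑ ℓ ∈ Finset.Icc 1 k, lam ℓ ≤ ∑ ℓ ∈ Finset.Icc 1 j, lam ℓ + (k - j) * lam k := by
  have hmono' : MonotoneOn lam (Set.Ici 1) := monotoneOn_nat_Ici_of_le_succ hmono
  have htail : ∑ ℓ ∈ Finset.Ioc j k, lam ℓ ≤ (k - j) * lam k := by
    calc ∑ ℓ ∈ Finset.Ioc j k, lam ℓ ≤ (Finset.Ioc j k).card • lam k :=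
          Finset.sum_le_card_nsmul _ _ _ fun ℓ hℓ => by
            obtain ⟨hjℓ, hℓk⟩ := Finset.mem_Ioc.1 hℓ
            exact hmono' (Set.mem_Ici.2 (by omega)) (Set.mem_Ici.2 (by omega)) hℓk
      _ = (k - j) * lam k := by rw [Nat.card_Ioc, nsmul_eq_mul, Nat.cast_sub hjk]
  have hsplit : ∑ ℓ ∈ Finset.Icc 1 j, lam ℓ + ∑ ℓ ∈ Finset.Ioc j k, lam ℓ =
      ∑ ℓ ∈ Finset.Icc 1 k, lam ℓ :=
    Finset.sum_Ioc_consecutive lam (Nat.zero_le j) hjk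
  linarith

theorem sum_Icc_le_of_rieszMean_ge (hmono : ∀ k : ℕ, 1 ≤ k → lam k ≤ lam (k + 1)) {d : ℝ}
    (hd : 0 < d) {j k : ℕ} (hj : 0 < j) (hk : 0 < k) (hμ : 0 < eigAvg lam j)
    (hz : 0 ≤ lam (k + 1))
    (hR : (j : ℝ) * lam (k + 1) ^ (1 + d / 2) /
        ((1 + d / 4) * ((1 + 4 / d) * eigAvg lam j) ^ (d / 2)) ≤ rieszMean lam 1 (lam (k + 1))) :
    ∑ ℓ ∈ Finset.Icc 1 k, lam ℓ ≤
      2 * j * eigAvg lam j * ((1 + d / 4) / (1 + d / 2) * (k / j)) ^ (1 + 2 / d) := by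
  have hsum : ∑ ℓ ∈ Finset.Icc 1 k, lam ℓ ≤ k * lam (k + 1) -
      j / ((1 + d / 4) * ((1 + 4 / d) * eigAvg lam j) ^ (d / 2)) * lam (k + 1) ^ (1 + d / 2) := by
    rw [rieszMean_one_eig_succ hmono k] at hR
    rw [div_mul_eq_mul_div]
    linarith
  set μ := eigAvg lam j
  set A := (1 + 4 / d) * μ
  set a := (j : ℝ) / ((1 + d / 4) * A ^ (d / 2))
  set CT := (1 + d / 4) / (1 + d / 2) * (k / j)
  have hj' : (0 : ℝ) < j := by exact_mod_cast hj
  have hk' : (0 : ℝ) < k := by exact_mod_cast hk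
  have hA : 0 < A := by positivity
  have hCT : 0 < CT := by positivity
  have hlegendre := mul_sub_mul_rpow_le (p := 1 + d / 2) (a := a) (by linarith) (by positivity)
    hk' hz
  have hbase : (k : ℝ) / ((1 + d / 2) * a) = CT * A ^ (d / 2) := by
    simp only [a, CT]
    field_simp
  have hexp : (1 + d / 2 - 1)⁻¹ = 2 / d := by ring
  rw [hbase, hexp, mul_rpow hCT.le (by positivity), ← rpow_mul hA.le,
    show d / 2 * (2 / d) = 1 by field_simp, rpow_one] at hlegendre
  calc ∑ ℓ ∈ Finset.Icc 1 k, lam ℓ ≤ (1 + d / 2 - 1) / (1 + d / 2) * k * (CT ^ (2 / d) * A) :=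
        hsum.trans hlegendre
    _ = 2 * j * μ * CT ^ (1 + 2 / d) := by
        rw [rpow_add hCT, rpow_one]
        simp only [A, CT]
        field_simp
        ring

theorem sum_Icc_le_of_eig_le (hmono : ∀ k : ℕ, 1 ≤ k → lam k ≤ lam (k + 1)) {d : ℝ}
    (hd : 0 < d) {j k : ℕ} (hj : 0 < j)
    (hk : (j : ℝ) * (1 + d / 2) / (1 + d / 4) ≤ k) (hμ : 0 ≤ eigAvg lam j)
    (hlam : lam k ≤ (1 + 4 / d) * eigAvg lam j) :
    ∑ ℓ ∈ Finset.Icc 1 k, lam ℓ ≤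
      2 * j * eigAvg lam j * ((1 + d / 4) / (1 + d / 2) * (k / j)) ^ (1 + 2 / d) := by
  have hj' : (0 : ℝ) < j := by exact_mod_cast hj
  have hSj : ∑ ℓ ∈ Finset.Icc 1 j, lam ℓ = j * eigAvg lam j := by
    rw [eigAvg]
    field_simp
  set μ := eigAvg lam j
  set CT := (1 + d / 4) / (1 + d / 2) * (k / j)
  have hCT : 1 ≤ CT := by
    simp only [CT]
    rw [div_le_iff₀ (by positivity)] at hk
    rw [div_mul_div_comm, le_div_iff₀ (by positivity)]
    linarith
  have hjk : (j : ℝ) ≤ k :=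
    (le_mul_one_add_half_div_one_add_quarter hd.le (Nat.cast_nonneg j)).trans hk
  have hbern := one_add_mul_self_le_rpow_one_add (s := CT - 1) (by linarith)
    (p := 1 + 2 / d) (by linarith [div_pos two_pos hd])
  rw [add_sub_cancel] at hbern
  calc ∑ ℓ ∈ Finset.Icc 1 k, lam ℓ ≤ j * μ + (k - j) * lam k :=
        hSj ▸ sum_Icc_le_add_mul hmono (by exact_mod_cast hjk)
    _ ≤ j * μ + (k - j) * ((1 + 4 / d) * μ) := by gcongr
    _ = 2 * j * μ * (1 + (1 + 2 / d) * (CT - 1)) := by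
        simp only [CT]
        field_simp
        ring
    _ ≤ 2 * j * μ * CT ^ (1 + 2 / d) := by gcongr

end Sequence

/-- Corollary 8 (the paper's main Weyl-type bound): from the lower bound (2.27) on
`R_1`, for every `k ≥ j (1 + d/2)/(1 + d/4)`,
`λ̄_k / λ̄_j ≤ 2 ((1 + d/4)/(1 + d/2))^(1 + 2/d) (k/j)^(2/d)`. -/
theorem avg_ratio_weyl_bound (d : ℕ) (hd : 0 < d) (j : ℕ) (hj : 1 ≤ j)
    (lam : ℕ → ℝ)
    (hmono : ∀ k : ℕ, 1 ≤ k → lam k ≤ lam (k + 1))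
    (hpos : 0 < lam 1)
    (hR1 : ∀ z : ℝ, (1 + 4 / (d : ℝ)) * eigAvg lam j ≤ z →
      rieszMean lam 1 z ≥
        (j : ℝ) * z ^ (1 + (d : ℝ) / 2) /
          ((1 + (d : ℝ) / 4) *
            ((1 + 4 / (d : ℝ)) * eigAvg lam j) ^ ((d : ℝ) / 2))) :
    ∀ k : ℕ, (j : ℝ) * (1 + (d : ℝ) / 2) / (1 + (d : ℝ) / 4) ≤ (k : ℝ) →
      eigAvg lam k / eigAvg lam j ≤
        2 * ((1 + (d : ℝ) / 4) / (1 + (d : ℝ) / 2)) ^ (1 + 2 / (d : ℝ)) *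
          ((k : ℝ) / (j : ℝ)) ^ (2 / (d : ℝ)) := by
  intro k hk
  have hd' : (0 : ℝ) < d := by exact_mod_cast hd
  have hj' : (0 : ℝ) < j := by exact_mod_cast hj
  have hk' : (0 : ℝ) < k :=
    hj'.trans_le ((le_mul_one_add_half_div_one_add_quarter hd'.le hj'.le).trans hk)
  have hk1 : 1 ≤ k := by exact_mod_cast hk'
  have hμ := eigAvg_pos hmono hpos hj
  have hsum : ∑ ℓ ∈ Finset.Icc 1 k, lam ℓ ≤
      2 * j * eigAvg lam j * ((1 + d / 4) / (1 + d / 2) * (k / j)) ^ (1 + 2 / (d : ℝ)) := by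
    rcases le_or_gt ((1 + 4 / (d : ℝ)) * eigAvg lam j) (lam (k + 1)) with hlarge | hsmall
    · have hA : 0 ≤ (1 + 4 / (d : ℝ)) * eigAvg lam j := by positivity
      exact sum_Icc_le_of_rieszMean_ge hmono hd' hj hk1 hμ (hA.trans hlarge) (hR1 _ hlarge)
    · exact sum_Icc_le_of_eig_le hmono hd' hj hk hμ.le ((hmono k hk1).trans hsmall.le)
  rw [div_le_iff₀ hμ, eigAvg, div_le_iff₀ hk']
  calc ∑ ℓ ∈ Finset.Icc 1 k, lam ℓ ≤ _ := hsum
    _ = _ := by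
      rw [mul_rpow (by positivity) (by positivity), rpow_add (div_pos hk' hj'), rpow_one]
      field_simp
end
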